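/- Let C be an n×n real positive definite matrix, φ > 0 and f ∈ ℝⁿ. Then (1/2)[log det(I + φ⁻¹C) + φ · tr((C + φI)⁻¹) − n + fᵀ(C + φI)⁻¹f] ≤ (1/2) fᵀ C⁻¹ f + (1/2) log det(I + φ⁻¹C). The left-hand side equals the Kullback–Leibler divergence KL(N(f, φI) ‖ N(0, C + φI)) between two n-dimensional Gaussians, so this KL divergence is bounded by half the RKHS-norm term fᵀC⁻¹f plus half the regret term log det(I + φ⁻¹C). -/

import Mathlib

/-!
With `A = C + φ I`, the left-hand side exceeds the right-hand side by
`(φ tr A⁻¹ - n) / 2 + (fᵀ A⁻¹ f - fᵀ C⁻¹ f) / 2`, so it suffices that `φ A⁻¹ ≤ I` and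
`A⁻¹ ≤ C⁻¹` in the Loewner order. Since `C` commutes with `A`, both differences are explicit
positive semidefinite matrices: `I - φ A⁻¹ = A⁻¹ (C A) A⁻¹` and `C⁻¹ - A⁻¹ = φ (C A)⁻¹`,
where `C A = C² + φ C ≥ 0`.
-/

namespace Matrix

variable {n : Type*} [Fintype n] [DecidableEq n]

theorem PosSemidef.mul_add_smul_one {R : Type*} [CommRing R] [PartialOrder R] [StarRing R]
    [StarOrderedRing R] {C : Matrix n n R} (hC : C.PosSemidef) {φ : R} (hφ : 0 ≤ φ) :
    (C * (C + φ • 1)).PosSemidef := by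
  rw [Matrix.mul_add, Matrix.mul_smul, Matrix.mul_one, ← sq]
  exact (hC.pow 2).add (hC.smul hφ)

variable {K : Type*} [Field K] [PartialOrder K] [StarRing K] [StarOrderedRing K]

theorem PosSemidef.one_sub_smul_inv_add_smul_one [PosMulStrictMono K] {C : Matrix n n K}
    (hC : C.PosSemidef) {φ : K} (hφ : 0 < φ) : (1 - φ • (C + φ • 1)⁻¹).PosSemidef := by
  set A := C + φ • (1 : Matrix n n K)
  have hA : A.PosDef := PosDef.posSemidef_add hC (PosDef.one.smul hφ)
  have hAu : IsUnit A.det := (isUnit_iff_isUnit_det A).mp hA.isUnit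
  have hconj : (A⁻¹)ᴴ * (C * A) * A⁻¹ = 1 - φ • A⁻¹ := by
    calc (A⁻¹)ᴴ * (C * A) * A⁻¹ = A⁻¹ * (A - φ • 1) := by
          rw [hA.inv.isHermitian.eq, Matrix.mul_assoc, mul_nonsing_inv_cancel_right _ _ hAu]
          simp only [A, add_sub_cancel_right]
      _ = 1 - φ • A⁻¹ := by
          rw [Matrix.mul_sub, nonsing_inv_mul _ hAu, Matrix.mul_smul, Matrix.mul_one]
  exact hconj ▸ (hC.mul_add_smul_one hφ.le).conjTranspose_mul_mul_same A⁻¹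

theorem PosDef.inv_sub_inv_add_smul_one {C : Matrix n n K} (hC : C.PosDef) {φ : K}
    (hφ : 0 ≤ φ) : (C⁻¹ - (C + φ • 1)⁻¹).PosSemidef := by
  set A := C + φ • (1 : Matrix n n K)
  have hAu : IsUnit A.det :=
    (isUnit_iff_isUnit_det A).mp (hC.add_posSemidef (PosSemidef.one.smul hφ)).isUnit
  have hCu : IsUnit C.det := (isUnit_iff_isUnit_det C).mp hC.isUnit
  have hdiff : C⁻¹ - A⁻¹ = φ • (C * A)⁻¹ := by
    calc C⁻¹ - A⁻¹ = A⁻¹ * (A - C) * C⁻¹ := by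
          rw [Matrix.mul_sub, nonsing_inv_mul _ hAu, Matrix.sub_mul, Matrix.one_mul,
            Matrix.mul_assoc, mul_nonsing_inv _ hCu, Matrix.mul_one]
      _ = φ • (C * A)⁻¹ := by
          simp only [A, add_sub_cancel_left, Matrix.mul_smul, Matrix.mul_one, Matrix.smul_mul,
            mul_inv_rev]
  exact hdiff ▸ (hC.posSemidef.mul_add_smul_one hφ).inv.smul hφ

theorem PosSemidef.mul_trace_inv_add_smul_one_le [PosMulStrictMono K] {C : Matrix n n K}
    (hC : C.PosSemidef) {φ : K} (hφ : 0 < φ) : φ * (C + φ • 1)⁻¹.trace ≤ Fintype.card n := by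
  have h := (hC.one_sub_smul_inv_add_smul_one hφ).trace_nonneg
  rw [trace_sub, trace_smul, trace_one, smul_eq_mul, sub_nonneg] at h
  exact h

theorem PosDef.dotProduct_inv_add_smul_one_mulVec_le {C : Matrix n n K} (hC : C.PosDef)
    {φ : K} (hφ : 0 ≤ φ) (x : n → K) :
    star x ⬝ᵥ ((C + φ • 1)⁻¹ *ᵥ x) ≤ star x ⬝ᵥ (C⁻¹ *ᵥ x) := by
  have h := (hC.inv_sub_inv_add_smul_one hφ).dotProduct_mulVec_nonneg x
  rwa [sub_mulVec, dotProduct_sub, sub_nonneg] at h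

end Matrix

open Matrix

/-- The finite-dimensional core of the information consistency theorem: the
Kullback–Leibler divergence `KL(N(f, φI) ‖ N(0, C + φI))`, which equals
`(1/2)[log det(I + φ⁻¹C) + φ tr((C + φI)⁻¹) − n + fᵀ(C + φI)⁻¹f]`, is bounded by half the
RKHS-norm term `fᵀC⁻¹f` plus half the regret term `log det(I + φ⁻¹C)`. -/
theorem kl_gaussian_bound_rkhs_plus_regret
    (n : ℕ) (C : Matrix (Fin n) (Fin n) ℝ) (hC : C.PosDef)
    (φ : ℝ) (hφ : 0 < φ) (f : Fin n → ℝ) :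
    (1/2) * (Real.log ((1 + φ⁻¹ • C : Matrix (Fin n) (Fin n) ℝ).det)
        + φ * ((C + φ • (1 : Matrix (Fin n) (Fin n) ℝ))⁻¹).trace - (n : ℝ)
        + f ⬝ᵥ ((C + φ • (1 : Matrix (Fin n) (Fin n) ℝ))⁻¹ *ᵥ f)) ≤
      (1/2) * (f ⬝ᵥ (C⁻¹ *ᵥ f))
        + (1/2) * Real.log ((1 + φ⁻¹ • C : Matrix (Fin n) (Fin n) ℝ).det) := by
  have htrace := hC.posSemidef.mul_trace_inv_add_smul_one_le hφ
  have hquad := hC.dotProduct_inv_add_smul_one_mulVec_le hφ.le f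
  rw [Fintype.card_fin] at htrace
  rw [star_trivial] at hquad
  linarith
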